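/- For the fusion metric dŝ² = α^{−2} Σ_{i=2}^{d} du_i² + α^{−2}(1 + u²/4)² dτ² on ℝ × ℝ^{d−1} (u² = Σu_i²), the scalar curvature is R̂ = −(d−1)α²/(1 + u²/4). In particular, on the defect locus u = 0 one has R̂ = −(d−1)α². -/

import Mathlib

/-!
The fusion metric is `α⁻²` times the warped product `f² dτ² + Σ duᵢ²` with warping function
`f = 1 + u²/4`, which does not depend on `τ`. Rescaling a metric by a constant `c` leaves its
Christoffel symbols and Ricci tensor unchanged, so it divides the scalar curvature by `c`. For a
warped product with `∂_τ f = 0` the only nonzero Christoffel symbols are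
`Γ^τ_{τi} = Γ^τ_{iτ} = ∂ᵢf / f` and `Γ^i_{ττ} = -f ∂ᵢf`; they give `R_{ττ} = -f Δf` and
`R_{ii} = -∂ᵢ²f / f`, hence `R = -2 Δf / f`. Finally `Δf = (d - 1)/2`.
-/

/-- Partial derivative `∂_i f` of a scalar function on `ℝ^d`. -/
noncomputable def pderiv' (d : ℕ) (f : (Fin d → ℝ) → ℝ) (i : Fin d)
    (x : Fin d → ℝ) : ℝ :=
  fderiv ℝ f x (Pi.single i 1)

/-- Christoffel symbols `Γ^k_{ij} = (1/2) g^{kl}(∂_i g_{jl} + ∂_j g_{il} − ∂_l g_{ij})`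
of a metric given in coordinates on `ℝ^d`. -/
noncomputable def christoffel (d : ℕ) (g : (Fin d → ℝ) → Matrix (Fin d) (Fin d) ℝ)
    (k i j : Fin d) (x : Fin d → ℝ) : ℝ :=
  (1 / 2) * ∑ l, (g x)⁻¹ k l *
    (pderiv' d (fun y => g y j l) i x + pderiv' d (fun y => g y i l) j x
      - pderiv' d (fun y => g y i j) l x)

/-- Ricci tensor in coordinates:
`R_{ij} = ∂_k Γ^k_{ij} − ∂_i Γ^k_{kj} + Γ^k_{kl}Γ^l_{ij} − Γ^k_{il}Γ^l_{kj}`. -/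
noncomputable def ricci (d : ℕ) (g : (Fin d → ℝ) → Matrix (Fin d) (Fin d) ℝ)
    (i j : Fin d) (x : Fin d → ℝ) : ℝ :=
  (∑ k, pderiv' d (christoffel d g k i j) k x)
    - (∑ k, pderiv' d (christoffel d g k k j) i x)
    + ∑ k, ∑ l, (christoffel d g k k l x * christoffel d g l i j x
        - christoffel d g k i l x * christoffel d g l k j x)

/-- Scalar curvature `R = g^{ij} R_{ij}` in coordinates. -/
noncomputable def scalarCurvature (d : ℕ)
    (g : (Fin d → ℝ) → Matrix (Fin d) (Fin d) ℝ) (x : Fin d → ℝ) : ℝ :=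
  ∑ i, ∑ j, (g x)⁻¹ i j * ricci d g i j x

section PartialDerivatives

variable {d : ℕ} {f g : (Fin d → ℝ) → ℝ} {x : Fin d → ℝ}

lemma pderiv'_const (c : ℝ) (i : Fin d) :
    pderiv' d (fun _ => c) i x = 0 := by
  simp [pderiv']

lemma pderiv'_apply (j i : Fin d) :
    pderiv' d (fun y => y j) i x = if i = j then 1 else 0 := by
  simp [pderiv', fderiv_apply, Pi.single_apply, eq_comm]

lemma pderiv'_const_mul (c : ℝ) (i : Fin d) :
    pderiv' d (fun y => c * f y) i x = c * pderiv' d f i x := by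
  simp [pderiv', ← smul_eq_mul, ← Pi.smul_def, fderiv_const_smul_field]

lemma pderiv'_neg (i : Fin d) :
    pderiv' d (fun y => -f y) i x = -pderiv' d f i x := by
  simp [pderiv', fderiv_fun_neg]

lemma pderiv'_add (hf : DifferentiableAt ℝ f x) (hg : DifferentiableAt ℝ g x) (i : Fin d) :
    pderiv' d (fun y => f y + g y) i x = pderiv' d f i x + pderiv' d g i x := by
  simp [pderiv', fderiv_fun_add hf hg]

lemma pderiv'_sum {ι : Type*} (s : Finset ι) {F : ι → (Fin d → ℝ) → ℝ}
    (hF : ∀ j ∈ s, DifferentiableAt ℝ (F j) x) (i : Fin d) :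
    pderiv' d (fun y => ∑ j ∈ s, F j y) i x = ∑ j ∈ s, pderiv' d (F j) i x := by
  simp [pderiv', fderiv_fun_sum hF]

lemma pderiv'_mul (hf : DifferentiableAt ℝ f x) (hg : DifferentiableAt ℝ g x) (i : Fin d) :
    pderiv' d (fun y => f y * g y) i x = f x * pderiv' d g i x + g x * pderiv' d f i x := by
  simp [pderiv', fderiv_fun_mul hf hg]

lemma pderiv'_inv (hf : DifferentiableAt ℝ f x) (hx : f x ≠ 0) (i : Fin d) :
    pderiv' d (fun y => (f y)⁻¹) i x = -pderiv' d f i x / f x ^ 2 := by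
  change fderiv ℝ ((fun y => y⁻¹) ∘ f) x _ = _
  rw [((hasDerivAt_inv hx).comp_hasFDerivAt x hf.hasFDerivAt).fderiv]
  simp [pderiv', div_eq_inv_mul]

lemma pderiv'_div (hf : DifferentiableAt ℝ f x) (hg : DifferentiableAt ℝ g x) (hx : g x ≠ 0)
    (i : Fin d) :
    pderiv' d (fun y => f y / g y) i x
      = pderiv' d f i x / g x - f x * pderiv' d g i x / g x ^ 2 := by
  simp only [div_eq_mul_inv]
  rw [pderiv'_mul (g := fun y => (g y)⁻¹) hf (hg.inv hx), pderiv'_inv hg hx]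
  ring

lemma ContDiff.differentiable_pderiv' (hf : ContDiff ℝ 2 f) (i : Fin d) :
    Differentiable ℝ (pderiv' d f i) :=
  ((hf.fderiv_right (m := 1) (by norm_num)).clm_apply contDiff_const).differentiable
    (by norm_num)

end PartialDerivatives

section Scaling

lemma Matrix.inv_smul_field {K n : Type*} [Field K] [Fintype n] [DecidableEq n] (c : K)
    (A : Matrix n n K) : (c • A)⁻¹ = c⁻¹ • A⁻¹ := by
  rcases eq_or_ne c 0 with rfl | hc
  · simp
  by_cases hA : IsUnit A.det
  · exact A.inv_smul' (Units.mk0 c hc) hA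
  · have hcA : ¬ IsUnit (c • A).det := by
      rwa [Matrix.det_smul, IsUnit.mul_iff, and_iff_right (hc.isUnit.pow _)]
    simp [Matrix.nonsing_inv_apply_not_isUnit _ hA, Matrix.nonsing_inv_apply_not_isUnit _ hcA]

variable {d : ℕ} (g : (Fin d → ℝ) → Matrix (Fin d) (Fin d) ℝ)

lemma christoffel_smul {c : ℝ} (hc : c ≠ 0) :
    christoffel d (fun x => c • g x) = christoffel d g := by
  ext k i j x
  simp only [christoffel, Matrix.smul_apply, smul_eq_mul, pderiv'_const_mul,
    Matrix.inv_smul_field]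
  congr 1
  refine Finset.sum_congr rfl fun l _ => ?_
  field_simp

lemma ricci_smul {c : ℝ} (hc : c ≠ 0) : ricci d (fun x => c • g x) = ricci d g := by
  ext i j x
  simp only [ricci, christoffel_smul g hc]

/-- For `c = 0` both sides vanish, since `0⁻¹ = 0` for matrices and for reals. -/
lemma scalarCurvature_smul (c : ℝ) (x : Fin d → ℝ) :
    scalarCurvature d (fun y => c • g y) x = c⁻¹ * scalarCurvature d g x := by
  rcases eq_or_ne c 0 with rfl | hc
  · simp [scalarCurvature]
  simp only [scalarCurvature, ricci_smul g hc, Matrix.inv_smul_field, Matrix.smul_apply,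
    smul_eq_mul, Finset.mul_sum, mul_assoc]

end Scaling

section WarpedProduct

variable {d : ℕ} (τ : Fin d) (f : (Fin d → ℝ) → ℝ)

noncomputable def warpedMetric (x : Fin d → ℝ) : Matrix (Fin d) (Fin d) ℝ :=
  Matrix.diagonal fun i => if i = τ then f x ^ 2 else 1

noncomputable def warpedChristoffel (k i j : Fin d) (x : Fin d → ℝ) : ℝ :=
  (if k = τ ∧ i = τ then pderiv' d f j x / f x else 0)
    + (if k = τ ∧ j = τ then pderiv' d f i x / f x else 0)
    - (if i = τ ∧ j = τ then f x * pderiv' d f k x else 0)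

noncomputable def coordLaplacian (x : Fin d → ℝ) : ℝ :=
  ∑ k, pderiv' d (pderiv' d f k) k x

variable {τ f}

lemma warpedMetric_inv {x : Fin d → ℝ} (hx : f x ≠ 0) :
    (warpedMetric τ f x)⁻¹ = Matrix.diagonal fun i => if i = τ then (f x ^ 2)⁻¹ else 1 := by
  refine Matrix.inv_eq_left_inv ?_
  rw [warpedMetric, Matrix.diagonal_mul_diagonal, ← Matrix.diagonal_one]
  congr 1
  ext i
  split_ifs <;> simp [hx]

lemma pderiv'_warpedMetric {x : Fin d → ℝ} (hf : DifferentiableAt ℝ f x) (i j n : Fin d) :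
    pderiv' d (fun y => warpedMetric τ f y i j) n x
      = if i = τ ∧ j = τ then 2 * f x * pderiv' d f n x else 0 := by
  by_cases hij : i = τ ∧ j = τ
  · obtain ⟨rfl, rfl⟩ := hij
    simp only [warpedMetric, Matrix.diagonal_apply_eq, if_true, and_self, pow_two]
    rw [pderiv'_mul hf hf]
    ring
  · have hconst : (fun y => warpedMetric τ f y i j) = fun _ => if i = j then 1 else 0 := by
      ext y
      by_cases h : i = j
      · subst h; simp_all [warpedMetric]
      · simp [warpedMetric, h]
    rw [hconst, pderiv'_const, if_neg hij]

variable (hf0 : ∀ y, f y ≠ 0) (hτ : ∀ y, pderiv' d f τ y = 0)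
include hf0 hτ

lemma christoffel_warpedMetric (hf : Differentiable ℝ f) :
    christoffel d (warpedMetric τ f) = warpedChristoffel τ f := by
  ext k i j x
  simp only [christoffel, warpedMetric_inv (hf0 x), Matrix.diagonal_apply, ite_mul, zero_mul,
    Finset.sum_ite_eq, Finset.mem_univ, if_true, pderiv'_warpedMetric (hf x)]
  have hx := hf0 x
  by_cases hk : k = τ <;> by_cases hi : i = τ <;> by_cases hj : j = τ <;>
    simp [warpedChristoffel, hk, hi, hj, hτ] <;> field_simp

variable (hf : ContDiff ℝ 2 f)
include hf

lemma ricci_warpedMetric_self (x : Fin d → ℝ) :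
    ricci d (warpedMetric τ f) τ τ x = -(f x * coordLaplacian f x) := by
  have hf' := hf.differentiable (by norm_num)
  have hΓττ : ∀ k, warpedChristoffel τ f k τ τ = fun y => -(f y * pderiv' d f k y) := by
    intro k; ext y; simp [warpedChristoffel, hτ]
  have hΓkkτ : ∀ k, warpedChristoffel τ f k k τ = fun _ => 0 := by
    intro k; ext y; by_cases hk : k = τ <;> simp [warpedChristoffel, hk, hτ]
  simp only [ricci, christoffel_warpedMetric hf0 hτ hf', hΓττ, hΓkkτ, pderiv'_const,
    pderiv'_neg, pderiv'_mul (hf' x) (hf.differentiable_pderiv' _ x)]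
  have hcancel : ∀ a : ℝ, a / f x * (f x * a) = a * a ∧ f x * a * (a / f x) = a * a :=
    fun a => ⟨by field_simp [hf0 x], by field_simp [hf0 x]⟩
  simp [warpedChristoffel, hτ, coordLaplacian, ite_and, Finset.sum_add_distrib,
    Finset.sum_sub_distrib, ite_mul, mul_ite, sub_mul, mul_sub, add_mul, Finset.sum_ite_eq',
    hcancel, Finset.mul_sum]

lemma ricci_warpedMetric_of_ne {i : Fin d} (hi : i ≠ τ) (x : Fin d → ℝ) :
    ricci d (warpedMetric τ f) i i x = -(pderiv' d (pderiv' d f i) i x / f x) := by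
  have hf' := hf.differentiable (by norm_num)
  have hΓkii : ∀ k, warpedChristoffel τ f k i i = fun _ => 0 := by
    intro k; ext y; simp [warpedChristoffel, hi]
  have hΓkki : ∀ k, warpedChristoffel τ f k k i
      = if k = τ then fun y => pderiv' d f i y / f y else fun _ => 0 := by
    intro k; by_cases hk : k = τ <;> ext y <;> simp [warpedChristoffel, hk, hi]
  simp only [ricci, christoffel_warpedMetric hf0 hτ hf', hΓkii, hΓkki,
    apply_ite (pderiv' d · i x), pderiv'_const,
    pderiv'_div (hf.differentiable_pderiv' i x) (hf' x) (hf0 x)]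
  have hcancel : ∀ a : ℝ, a / f x * (a / f x) = a * a / f x ^ 2 :=
    fun a => by field_simp
  simp only [warpedChristoffel, hi, ite_and, ite_mul, mul_ite, Finset.sum_ite_eq', hcancel,
    Finset.sum_const_zero, Finset.mem_univ, ↓reduceIte, zero_sub, neg_sub, and_self, mul_zero,
    and_false, zero_add, false_and, sub_zero, add_zero, zero_mul, Finset.sum_neg_distrib]
  ring

lemma scalarCurvature_warpedMetric (x : Fin d → ℝ) :
    scalarCurvature d (warpedMetric τ f) x = -2 * coordLaplacian f x / f x := by
  have hsplit : scalarCurvature d (warpedMetric τ f) x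
      = (f x ^ 2)⁻¹ * ricci d (warpedMetric τ f) τ τ x
        + ∑ i ∈ {τ}ᶜ, ricci d (warpedMetric τ f) i i x := by
    simp only [scalarCurvature, warpedMetric_inv (hf0 x), Matrix.diagonal_apply, ite_mul,
      zero_mul, Finset.sum_ite_eq, Finset.mem_univ, if_true]
    rw [Fintype.sum_eq_add_sum_compl τ, if_pos rfl]
    congr 1
    exact Finset.sum_congr rfl fun i hi => by simp_all
  have hlap : coordLaplacian f x = ∑ i ∈ {τ}ᶜ, pderiv' d (pderiv' d f i) i x := by
    have h0 : pderiv' d f τ = fun _ => 0 := funext hτ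
    rw [coordLaplacian, Fintype.sum_eq_add_sum_compl τ, h0, pderiv'_const, zero_add]
  rw [hsplit, ricci_warpedMetric_self hf0 hτ hf, hlap,
    Finset.sum_congr rfl fun i hi => ricci_warpedMetric_of_ne hf0 hτ hf (by simpa using hi) x,
    Finset.sum_neg_distrib, ← Finset.sum_div]
  field_simp [hf0 x]
  ring

end WarpedProduct

section FusionMetric

variable {d : ℕ} (τ : Fin d)

noncomputable def fusionWarping (x : Fin d → ℝ) : ℝ :=
  1 + (∑ i ∈ Finset.univ.filter (· ≠ τ), x i ^ 2) / 4

lemma fusionWarping_pos (x : Fin d → ℝ) : 0 < fusionWarping τ x := by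
  unfold fusionWarping
  positivity

lemma contDiff_fusionWarping : ContDiff ℝ 2 (fusionWarping τ) := by
  unfold fusionWarping
  fun_prop

lemma pderiv'_fusionWarping (k : Fin d) :
    pderiv' d (fusionWarping τ) k = fun x => if k = τ then 0 else 2⁻¹ * x k := by
  ext x
  unfold fusionWarping
  simp only [div_eq_inv_mul]
  rw [pderiv'_add (by fun_prop) (by fun_prop), pderiv'_const, pderiv'_const_mul,
    pderiv'_sum _ (by fun_prop)]
  simp (disch := fun_prop) only [pow_two, pderiv'_mul, pderiv'_apply, mul_ite, mul_one,
    mul_zero, zero_add]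
  rw [Finset.sum_add_distrib, Finset.sum_ite_eq]
  by_cases hk : k = τ
  · simp [hk]
  · rw [if_pos (by simpa using hk), if_neg hk]
    ring

lemma coordLaplacian_fusionWarping (x : Fin d → ℝ) :
    coordLaplacian (fusionWarping τ) x = ((d : ℝ) - 1) / 2 := by
  have hcompl : (({τ}ᶜ : Finset (Fin d)).card : ℝ) = d - 1 := by
    rw [Finset.card_compl, Finset.card_singleton, Fintype.card_fin, Nat.cast_sub τ.pos]
    norm_num
  have hsecond : ∀ k ∈ ({τ}ᶜ : Finset (Fin d)),
      pderiv' d (pderiv' d (fusionWarping τ) k) k x = 2⁻¹ := by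
    intro k hk
    have hkτ : k ≠ τ := by simpa using hk
    simp only [pderiv'_fusionWarping, hkτ, if_false, pderiv'_const_mul, pderiv'_apply, if_true,
      mul_one]
  rw [coordLaplacian, Fintype.sum_eq_add_sum_compl τ, Finset.sum_congr rfl hsecond,
    pderiv'_fusionWarping]
  simp only [↓reduceIte, pderiv'_const, Finset.sum_const, nsmul_eq_mul, hcompl, zero_add]
  ring

end FusionMetric

/-- For the fusion metric `dŝ² = α⁻² Σ duᵢ² + α⁻²(1 + u²/4)² dτ²` on `ℝ × ℝ^{d−1}`,
the scalar curvature is `R̂ = −(d−1)α²/(1 + u²/4)`; in particular `R̂ = −(d−1)α²` on the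
defect locus `u = 0`. -/
theorem fusion_metric_scalar_curvature (d : ℕ) (hd : 2 ≤ d) (α : ℝ) :
    let τidx : Fin d := ⟨0, by omega⟩
    let usq : (Fin d → ℝ) → ℝ := fun x => ∑ i ∈ Finset.univ.filter (· ≠ τidx), x i ^ 2
    let g : (Fin d → ℝ) → Matrix (Fin d) (Fin d) ℝ := fun x =>
      Matrix.of fun i j =>
        if i = j then
          (if i = τidx then (α ^ 2)⁻¹ * (1 + usq x / 4) ^ 2 else (α ^ 2)⁻¹)
        else 0
    (∀ x : Fin d → ℝ, scalarCurvature d g x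
        = -((d : ℝ) - 1) * α ^ 2 / (1 + usq x / 4)) ∧
    (∀ x : Fin d → ℝ, usq x = 0 →
        scalarCurvature d g x = -((d : ℝ) - 1) * α ^ 2) := by
  intro τ usq g
  have hg : g = fun x => (α ^ 2)⁻¹ • warpedMetric τ (fusionWarping τ) x := by
    ext x i j
    by_cases hij : i = j <;> simp [g, warpedMetric, fusionWarping, usq, hij]
  have hR : ∀ x, scalarCurvature d g x = -((d : ℝ) - 1) * α ^ 2 / (1 + usq x / 4) := by
    intro x
    change _ = _ / fusionWarping τ x
    have hF := (fusionWarping_pos τ x).ne'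
    rw [hg, scalarCurvature_smul, inv_inv, scalarCurvature_warpedMetric
      (fun y => (fusionWarping_pos τ y).ne') (fun y => by simp [pderiv'_fusionWarping])
      (contDiff_fusionWarping τ), coordLaplacian_fusionWarping]
    field_simp
  exact ⟨hR, fun x hx => by rw [hR, hx]; norm_num⟩
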